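/- If for every attribute A ∈ 𝒜 one has c(A)/β(A) ≤ Σ_{B ∈ 𝒞(A)} c(B)/β(B), where 𝒞(A) denotes the set of direct children of A in the augmented hierarchy 𝒜̄ (with perfect tests having cost c* and power 1), then the coarse-to-fine strategy minimizes the expected cost over all no-error strategies. -/

import Mathlib

open Finset

/-- A tree-structured attribute hierarchy on a finite pattern set `Y`: a finite family of
nonempty attributes containing `𝒴` itself, any two of which are disjoint or nested, and
in which every singleton is the intersection of the attributes containing it. -/
structure Hierarchy (Y : Type*) [Fintype Y] [DecidableEq Y] where
  attrs : Finset (Finset Y)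
  univ_mem : Finset.univ ∈ attrs
  nonempty_of_mem : ∀ A ∈ attrs, A.Nonempty
  nested : ∀ A ∈ attrs, ∀ B ∈ attrs, A ∩ B = ∅ ∨ A ⊆ B ∨ B ⊆ A
  singleton_inf : ∀ y : Y, (attrs.filter fun A => y ∈ A).inf id = {y}

/-- A testing strategy: a finite binary tree whose internal nodes are labeled by tests;
at each node the test is performed, the right subtree being followed on a positive
outcome and the left subtree on a null outcome. -/
inductive Strategy (ι : Type*) where
  | leaf : Strategy ι
  | node : ι → Strategy ι → Strategy ι → Strategy ι

namespace Strategy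

variable {ι : Type*} [DecidableEq ι]

/-- The set of tests performed on outcome `ω` (`ω i = false` means test `i` returned `0`). -/
def performed : Strategy ι → (ι → Bool) → Finset ι
  | leaf, _ => ∅
  | node i t0 t1, ω => insert i (if ω i then performed t1 ω else performed t0 ω)

/-- The zero set: performed tests that returned `0`. -/
def zeroSet : Strategy ι → (ι → Bool) → Finset ι
  | leaf, _ => ∅
  | node i t0 t1, ω => if ω i then zeroSet t1 ω else insert i (zeroSet t0 ω)

/-- No test occurs twice along a root-to-leaf branch (relative to tests already used). -/
def noRepeatFrom : Strategy ι → Finset ι → Prop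
  | leaf, _ => True
  | node i t0 t1, used =>
      i ∉ used ∧ noRepeatFrom t0 (insert i used) ∧ noRepeatFrom t1 (insert i used)

/-- No test occurs twice along any root-to-leaf branch. -/
def noRepeat (T : Strategy ι) : Prop := T.noRepeatFrom ∅

/-- All node labels of the strategy belong to `S`. -/
def labelsIn : Strategy ι → Finset ι → Prop
  | leaf, _ => True
  | node i t0 t1, S => i ∈ S ∧ labelsIn t0 S ∧ labelsIn t1 S

end Strategy

/-- Probability of the elementary outcome `ω` when the tests are mutually independent
and test `i` returns `0` with probability `pw i` (its power). -/
def pOmega {ι : Type*} [Fintype ι] (pw : ι → ℝ) (ω : ι → Bool) : ℝ :=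
  ∏ i, if ω i then 1 - pw i else pw i

/-- Probability of an event (a set of outcomes) under the background product measure. -/
def probOf {ι : Type*} [Fintype ι] [DecidableEq ι] (pw : ι → ℝ)
    (E : Finset (ι → Bool)) : ℝ :=
  ∑ ω ∈ E, pOmega pw ω

/-- Expected testing cost of a strategy: `Σ_i c i · P₀(test i is performed)`. -/
def testCost {ι : Type*} [Fintype ι] [DecidableEq ι] (pw cst : ι → ℝ)
    (T : Strategy ι) : ℝ :=
  ∑ i, cst i * probOf pw (Finset.univ.filter fun ω => i ∈ T.performed ω)

section Augmented

variable {Y : Type*} [Fintype Y] [DecidableEq Y]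

/-- Index set of the augmented hierarchy: the original attributes together with, for
each pattern `y`, an extra copy of `{y}` carrying a perfect test. -/
def AugIdx (H : Hierarchy Y) : Type _ := {A : Finset Y // A ∈ H.attrs} ⊕ Y

instance (H : Hierarchy Y) : Fintype (AugIdx H) :=
  inferInstanceAs (Fintype ({A : Finset Y // A ∈ H.attrs} ⊕ Y))

instance (H : Hierarchy Y) : DecidableEq (AugIdx H) :=
  inferInstanceAs (DecidableEq ({A : Finset Y // A ∈ H.attrs} ⊕ Y))

/-- The set of patterns covered by an augmented attribute. -/
def augSet (H : Hierarchy Y) : AugIdx H → Finset Y :=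
  Sum.elim (fun A => A.val) (fun y => {y})

/-- Powers in the augmented hierarchy: the original power `β A` on original attributes,
and power `1` on the perfect singleton tests. -/
def augPow (H : Hierarchy Y) (β : Finset Y → ℝ) : AugIdx H → ℝ :=
  Sum.elim (fun A => β A.val) (fun _ => 1)

/-- Costs in the augmented hierarchy: the original cost `c A` on original attributes,
and cost `c*` on the perfect singleton tests. -/
def augCost (H : Hierarchy Y) (c : Finset Y → ℝ) (cstar : ℝ) : AugIdx H → ℝ :=
  Sum.elim (fun A => c A.val) (fun _ => cstar)

/-- A set of augmented attributes is a covering if its members cover all of `𝒴`. -/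
def IsCovering (H : Hierarchy Y) (Z : Finset (AugIdx H)) : Prop :=
  Z.sup (augSet H) = Finset.univ

instance (H : Hierarchy Y) (Z : Finset (AugIdx H)) : Decidable (IsCovering H Z) :=
  inferInstanceAs (Decidable (_ = _))

/-- The no-error constraint: almost surely under the background measure, the zero set of
the strategy is a covering. -/
def NoError (H : Hierarchy Y) (β : Finset Y → ℝ) (T : Strategy (AugIdx H)) : Prop :=
  probOf (augPow H β)
    (Finset.univ.filter fun ω => ¬ IsCovering H (T.zeroSet ω)) = 0

end Augmented

variable {Y : Type*} [Fintype Y] [DecidableEq Y]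

/-- `augAnc H i j` : `i` is a strict ancestor of `j` in the augmented hierarchy. -/
def augAnc (H : Hierarchy Y) : AugIdx H → AugIdx H → Prop
  | Sum.inl A, Sum.inl B => B.val ⊂ A.val
  | Sum.inl A, Sum.inr y => y ∈ A.val
  | Sum.inr _, _ => False

instance (H : Hierarchy Y) (i j : AugIdx H) : Decidable (augAnc H i j) :=
  match i, j with
  | Sum.inl A, Sum.inl B => inferInstanceAs (Decidable (B.val ⊂ A.val))
  | Sum.inl A, Sum.inr y => inferInstanceAs (Decidable (y ∈ A.val))
  | Sum.inr _, Sum.inl _ => inferInstanceAs (Decidable False)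
  | Sum.inr _, Sum.inr _ => inferInstanceAs (Decidable False)

/-- `augChild H A j` : `j` is a direct child of the original attribute `A` in the
augmented hierarchy (a maximal attribute strictly contained in `A`, or the perfect test
attached to `A` when `A` is a singleton `{y}`). -/
def augChild (H : Hierarchy Y) (A : {A : Finset Y // A ∈ H.attrs}) :
    AugIdx H → Prop
  | Sum.inl B => B.val ⊂ A.val ∧ ∀ C ∈ H.attrs, ¬ (B.val ⊂ C ∧ C ⊂ A.val)
  | Sum.inr y => A.val = {y}

instance (H : Hierarchy Y) (A : {A : Finset Y // A ∈ H.attrs}) (j : AugIdx H) :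
    Decidable (augChild H A j) :=
  match j with
  | Sum.inl B =>
      inferInstanceAs (Decidable (B.val ⊂ A.val ∧ ∀ C ∈ H.attrs, ¬ (B.val ⊂ C ∧ C ⊂ A.val)))
  | Sum.inr y => inferInstanceAs (Decidable (A.val = {y}))

/-- The set of direct children of `A` in the augmented hierarchy. -/
def augChildren (H : Hierarchy Y) (A : {A : Finset Y // A ∈ H.attrs}) :
    Finset (AugIdx H) :=
  Finset.univ.filter (augChild H A)

/-- A strategy is coarse-to-fine if, on every outcome, a test is performed if and only
if each of its strict ancestors has been tested and returned a positive answer. -/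
def IsCTFAug (H : Hierarchy Y) (T : Strategy (AugIdx H)) : Prop :=
  ∀ ω, T.performed ω = Finset.univ.filter fun j => ∀ i, augAnc H i j → ω i = true


section CTFProbAux
variable {ι : Type*} [Fintype ι] [DecidableEq ι]

lemma pOmega_nonneg (pw : ι → ℝ) (h : ∀ i, 0 ≤ pw i ∧ pw i ≤ 1) (ω : ι → Bool) :
    0 ≤ pOmega pw ω := by
  refine Finset.prod_nonneg fun i _ => ?_
  rcases h i with ⟨h0, h1⟩
  split <;> linarith

lemma probOf_and_false (pw : ι → ℝ) (i : ι) (P : (ι → Bool) → Prop) [DecidablePred P]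
    (hP : ∀ ω b, P (Function.update ω i b) ↔ P ω) :
    probOf pw (univ.filter fun ω => P ω ∧ ω i = false)
      = pw i * probOf pw (univ.filter P) := by
  classical
  set f : ι → Bool → ℝ := fun j b => if b then 1 - pw j else pw j with hf
  have hpO : ∀ ω : ι → Bool, pOmega pw ω = f i (ω i) * ∏ j ∈ univ.erase i, f j (ω j) := by
    intro ω
    exact (Finset.mul_prod_erase univ (fun j => f j (ω j)) (mem_univ i)).symm
  set g : (ι → Bool) → ℝ := fun ω => ∏ j ∈ univ.erase i, f j (ω j) with hg
  have hgupd : ∀ (ω : ι → Bool) (b : Bool), g (Function.update ω i b) = g ω := by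
    intro ω b
    refine Finset.prod_congr rfl fun j hj => ?_
    rw [Function.update_of_ne (Finset.ne_of_mem_erase hj)]
  have hswap : ∀ b : Bool,
      ∑ ω ∈ univ.filter (fun ω => P ω ∧ ω i = b), g ω
        = ∑ ω ∈ univ.filter (fun ω => P ω ∧ ω i = true), g ω := by
    intro b
    cases b with
    | true => rfl
    | false =>
      refine Finset.sum_nbij' (fun ω => Function.update ω i true)
        (fun ω => Function.update ω i false) ?_ ?_ ?_ ?_ ?_
      · intro ω hω
        simp only [mem_filter, mem_univ, true_and] at hω ⊢
        exact ⟨(hP ω true).2 hω.1, Function.update_self i true ω⟩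
      · intro ω hω
        simp only [mem_filter, mem_univ, true_and] at hω ⊢
        exact ⟨(hP ω false).2 hω.1, Function.update_self i false ω⟩
      · intro ω hω
        simp only [mem_filter, mem_univ, true_and] at hω
        funext j
        by_cases hj : j = i
        · subst hj; simp [hω.2]
        · simp [Function.update_of_ne hj]
      · intro ω hω
        simp only [mem_filter, mem_univ, true_and] at hω
        funext j
        by_cases hj : j = i
        · subst hj; simp [hω.2]
        · simp [Function.update_of_ne hj]
      · intro ω hω
        exact (hgupd ω true).symm
  have hslice : ∀ b : Bool,
      probOf pw (univ.filter fun ω => P ω ∧ ω i = b)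
        = f i b * ∑ ω ∈ univ.filter (fun ω => P ω ∧ ω i = true), g ω := by
    intro b
    rw [← hswap b]
    unfold probOf
    rw [Finset.mul_sum]
    refine Finset.sum_congr rfl fun ω hω => ?_
    simp only [mem_filter, mem_univ, true_and] at hω
    rw [hpO ω, hω.2]
  have htot : probOf pw (univ.filter P)
      = ∑ ω ∈ univ.filter (fun ω => P ω ∧ ω i = true), g ω := by
    have hsplit : probOf pw (univ.filter P)
        = probOf pw (univ.filter fun ω => P ω ∧ ω i = true)
          + probOf pw (univ.filter fun ω => P ω ∧ ω i = false) := by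
      unfold probOf
      rw [← Finset.sum_filter_add_sum_filter_not (univ.filter P) (fun ω => ω i = true)]
      congr 1
      · rw [Finset.filter_filter]
      · rw [Finset.filter_filter]
        apply Finset.sum_congr _ (fun _ _ => rfl)
        apply Finset.filter_congr
        intro ω _
        simp [Bool.not_eq_true]
    rw [hsplit, hslice true, hslice false]
    have : f i true + f i false = 1 := by simp [hf]
    rw [← add_mul, this, one_mul]
  rw [hslice false, htot]
  simp [hf]

lemma mem_performed_update (T : Strategy ι) (i : ι) (ω : ι → Bool) (b : Bool) :
    i ∈ T.performed (Function.update ω i b) ↔ i ∈ T.performed ω := by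
  induction T with
  | leaf => simp [Strategy.performed]
  | node j t0 t1 ih0 ih1 =>
    by_cases hji : j = i
    · subst hji; simp [Strategy.performed]
    · simp only [Strategy.performed, Function.update_of_ne hji, Finset.mem_insert]
      cases hω : ω j <;> simp only [if_true, if_false, Bool.false_eq_true] <;>
        exact or_congr Iff.rfl (by first | exact ih0 | exact ih1)

lemma zeroSet_eq_filter (T : Strategy ι) (ω : ι → Bool) :
    T.zeroSet ω = (T.performed ω).filter (fun i => ω i = false) := by
  induction T with
  | leaf => simp [Strategy.performed, Strategy.zeroSet]
  | node j t0 t1 ih0 ih1 =>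
    simp only [Strategy.performed, Strategy.zeroSet]
    cases hω : ω j
    · simp [Finset.filter_insert, hω, ih0]
    · simp [Finset.filter_insert, hω, ih1]

lemma testCost_eq (pw cst : ι → ℝ) (hpw : ∀ i, pw i ≠ 0) (T : Strategy ι) :
    testCost pw cst T = ∑ ω, pOmega pw ω * ∑ i ∈ T.zeroSet ω, cst i / pw i := by
  classical
  unfold testCost
  have step1 : ∀ i : ι, cst i * probOf pw (Finset.univ.filter fun ω => i ∈ T.performed ω)
      = (cst i / pw i) * probOf pw (Finset.univ.filter fun ω => i ∈ T.zeroSet ω) := by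
    intro i
    have h1 := probOf_and_false pw i (fun ω => i ∈ T.performed ω)
      (fun ω b => mem_performed_update T i ω b)
    have h2 : (univ.filter fun ω => i ∈ T.performed ω ∧ ω i = false)
        = (univ.filter fun ω : ι → Bool => i ∈ T.zeroSet ω) := by
      apply Finset.filter_congr
      intro ω _
      rw [zeroSet_eq_filter, Finset.mem_filter]
    rw [← h2, h1, ← mul_assoc, div_mul_cancel₀ _ (hpw i)]
  rw [Finset.sum_congr rfl fun i _ => step1 i]
  unfold probOf
  have : ∀ i : ι, (cst i / pw i) * ∑ ω ∈ univ.filter (fun ω => i ∈ T.zeroSet ω), pOmega pw ω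
      = ∑ ω : ι → Bool, (if i ∈ T.zeroSet ω then (cst i / pw i) * pOmega pw ω else 0) := by
    intro i
    rw [Finset.mul_sum, Finset.sum_filter]
  rw [Finset.sum_congr rfl fun i _ => this i, Finset.sum_comm]
  refine Finset.sum_congr rfl fun ω _ => ?_
  rw [Finset.mul_sum, Finset.sum_ite_mem, Finset.univ_inter]
  exact Finset.sum_congr rfl fun i _ => mul_comm _ _

end CTFProbAux

section CTFProofAux
variable {Y : Type*} [Fintype Y] [DecidableEq Y] (H : Hierarchy Y)

/-- Rank function compatible with the ancestor relation. -/
def rnk : AugIdx H → ℕ := Sum.elim (fun A => 2 * A.val.card) (fun _ => 1)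

lemma augSet_nonempty (i : AugIdx H) : (augSet H i).Nonempty := by
  cases i with
  | inl A => exact H.nonempty_of_mem A.val A.property
  | inr y => exact ⟨y, Finset.mem_singleton_self y⟩

lemma augAnc_trans {i j k : AugIdx H} (h1 : augAnc H i j) (h2 : augAnc H j k) :
    augAnc H i k := by
  cases i with
  | inr y => exact absurd h1 (by cases j <;> exact not_false
      )
  | inl A =>
    cases j with
    | inr y => exact absurd h2 (by cases k <;> exact not_false)
    | inl B =>
      cases k with
      | inl C => exact (show C.val ⊂ B.val from h2).trans (show B.val ⊂ A.val from h1)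
      | inr y => exact (show B.val ⊂ A.val from h1).subset (show y ∈ B.val from h2)

lemma rnk_lt_of_anc {i j : AugIdx H} (h : augAnc H j i) : rnk H i < rnk H j := by
  cases j with
  | inr y => exact absurd h (by cases i <;> exact not_false)
  | inl A =>
    cases i with
    | inl B =>
      have := Finset.card_lt_card (show B.val ⊂ A.val from h)
      simp only [rnk, Sum.elim_inl]; omega
    | inr y =>
      have : 0 < A.val.card := Finset.card_pos.2 (H.nonempty_of_mem A.val A.property)
      simp only [rnk, Sum.elim_inl, Sum.elim_inr]; omega

lemma augSet_subset_of_rel {t i : AugIdx H} (h : t = i ∨ augAnc H t i) :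
    augSet H i ⊆ augSet H t := by
  rcases h with rfl | h
  · exact subset_rfl
  · cases t with
    | inr y => exact absurd h (by cases i <;> exact not_false)
    | inl A =>
      cases i with
      | inl B => exact (show B.val ⊂ A.val from h).subset
      | inr y => exact Finset.singleton_subset_iff.2 (show y ∈ A.val from h)

lemma singleton_mem_attrs (y : Y) : ({y} : Finset Y) ∈ H.attrs := by
  classical
  set F := H.attrs.filter (fun A => y ∈ A) with hF
  have hFne : F.Nonempty := ⟨Finset.univ, Finset.mem_filter.2 ⟨H.univ_mem, Finset.mem_univ y⟩⟩
  obtain ⟨m, hmF, hmin⟩ := F.exists_minimal hFne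
  obtain ⟨hm_attrs, hym⟩ := Finset.mem_filter.1 hmF
  have hmle : ∀ B ∈ F, m ⊆ B := by
    intro B hB
    obtain ⟨hB_attrs, hyB⟩ := Finset.mem_filter.1 hB
    rcases H.nested m hm_attrs B hB_attrs with hd | hsub | hsub
    · exact absurd (Finset.mem_inter.2 ⟨hym, hyB⟩) (by rw [hd]; exact Finset.notMem_empty y)
    · exact hsub
    · rcases eq_or_ne B m with rfl | hne
      · exact subset_rfl
      · exact absurd (hmin hB hsub) (Finset.ssubset_iff_subset_ne.2 ⟨hsub, hne⟩).not_subset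
  have hminf : m ⊆ F.inf id := Finset.le_inf fun B hB => hmle B hB
  rw [hF, H.singleton_inf y] at hminf
  have : m = {y} := Finset.Subset.antisymm hminf (Finset.singleton_subset_iff.2 hym)
  rwa [this] at hm_attrs

lemma exists_child_above (A : {A : Finset Y // A ∈ H.attrs}) {B : Finset Y}
    (hB : B ∈ H.attrs) (hBA : B ⊂ A.val) :
    ∃ C : Finset Y, ∃ hC : C ∈ H.attrs, B ⊆ C ∧
      (Sum.inl ⟨C, hC⟩ : AugIdx H) ∈ augChildren H A := by
  classical
  set G := H.attrs.filter (fun C => B ⊆ C ∧ C ⊂ A.val) with hG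
  have hGne : G.Nonempty := ⟨B, Finset.mem_filter.2 ⟨hB, subset_rfl, hBA⟩⟩
  obtain ⟨m, hmG, hmax⟩ := G.exists_maximal hGne
  obtain ⟨hm_attrs, hBm, hmA⟩ := Finset.mem_filter.1 hmG
  refine ⟨m, hm_attrs, hBm, ?_⟩
  refine (Finset.mem_filter (α := AugIdx H)).2 ⟨Finset.mem_univ _, ?_⟩
  refine ⟨hmA, fun C' hC' hcon => ?_⟩
  have : C' ∈ G := Finset.mem_filter.2 ⟨hC', hBm.trans hcon.1.subset, hcon.2⟩
  exact hcon.1.not_subset (hmax this hcon.1.subset)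

lemma exists_child_rel (A : {A : Finset Y // A ∈ H.attrs}) {i : AugIdx H}
    (h : augAnc H (Sum.inl A) i) :
    ∃ k ∈ augChildren H A, k = i ∨ augAnc H k i := by
  cases i with
  | inl B =>
    obtain ⟨C, hC, hBC, hchild⟩ := exists_child_above H A B.property (show B.val ⊂ A.val from h)
    refine ⟨Sum.inl ⟨C, hC⟩, hchild, ?_⟩
    rcases eq_or_ne B.val C with he | hne
    · exact Or.inl (congrArg Sum.inl (Subtype.ext he.symm))
    · exact Or.inr (show B.val ⊂ C from Finset.ssubset_iff_subset_ne.2 ⟨hBC, hne⟩)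
  | inr y =>
    have hyA : y ∈ A.val := h
    by_cases hA : A.val = {y}
    · exact ⟨Sum.inr y, Finset.mem_filter.2 ⟨Finset.mem_univ _, hA⟩, Or.inl rfl⟩
    · have hsy : ({y} : Finset Y) ⊂ A.val :=
        Finset.ssubset_iff_subset_ne.2 ⟨Finset.singleton_subset_iff.2 hyA, fun e => hA e.symm⟩
      obtain ⟨C, hC, hyC, hchild⟩ := exists_child_above H A (singleton_mem_attrs H y) hsy
      exact ⟨Sum.inl ⟨C, hC⟩, hchild,
        Or.inr (show y ∈ C from Finset.singleton_subset_iff.1 hyC)⟩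

lemma augSet_child_subset {A : {A : Finset Y // A ∈ H.attrs}} {k : AugIdx H}
    (hk : k ∈ augChildren H A) : augSet H k ⊆ A.val := by
  have hk' := (Finset.mem_filter.1 hk).2
  cases k with
  | inl B => exact (hk'.1 : B.val ⊂ A.val).subset
  | inr y =>
    have : A.val = {y} := hk'
    rw [this]; exact subset_rfl

lemma children_disjoint {A : {A : Finset Y // A ∈ H.attrs}} {k k' : AugIdx H}
    (hk : k ∈ augChildren H A) (hk' : k' ∈ augChildren H A) {x : Y}
    (hx : x ∈ augSet H k) (hx' : x ∈ augSet H k') : k = k' := by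
  have hc := (Finset.mem_filter.1 hk).2
  have hc' := (Finset.mem_filter.1 hk').2
  cases k with
  | inl B =>
    cases k' with
    | inl B' =>
      have h1 : B.val ⊂ A.val ∧ _ := hc
      have h2 : B'.val ⊂ A.val ∧ _ := hc'
      have hnest : B.val ⊆ B'.val ∨ B'.val ⊆ B.val := by
        rcases H.nested B.val B.property B'.val B'.property with hd | h | h
        · exact absurd (show x ∈ B.val ∩ B'.val from
              Finset.mem_inter.2 ⟨(hx : x ∈ B.val), (hx' : x ∈ B'.val)⟩)
            (by rw [hd]; exact Finset.notMem_empty x)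
        · exact Or.inl h
        · exact Or.inr h
      rcases hnest with hsub | hsub
      · rcases eq_or_ne B.val B'.val with he | hne
        · congr 1; exact Subtype.ext he
        · exact absurd ⟨Finset.ssubset_iff_subset_ne.2 ⟨hsub, hne⟩, h2.1⟩
            (h1.2 B'.val B'.property)
      · rcases eq_or_ne B'.val B.val with he | hne
        · congr 1; exact Subtype.ext he.symm
        · exact absurd ⟨Finset.ssubset_iff_subset_ne.2 ⟨hsub, hne⟩, h1.1⟩
            (h2.2 B.val B.property)
    | inr y =>
      exfalso
      have hA : A.val = {y} := hc'
      have h1 : B.val ⊂ A.val := hc.1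
      rw [hA] at h1
      obtain ⟨z, hz⟩ := H.nonempty_of_mem B.val B.property
      have : z = y := Finset.mem_singleton.1 (h1.subset hz)
      subst this
      exact h1.not_subset (Finset.singleton_subset_iff.2 hz)
  | inr y =>
    cases k' with
    | inl B' =>
      exfalso
      have hA : A.val = {y} := hc
      have h1 : B'.val ⊂ A.val := hc'.1
      rw [hA] at h1
      obtain ⟨z, hz⟩ := H.nonempty_of_mem B'.val B'.property
      have : z = y := Finset.mem_singleton.1 (h1.subset hz)
      subst this
      exact h1.not_subset (Finset.singleton_subset_iff.2 hz)
    | inr y' =>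
      have hA : A.val = {y} := hc
      have hA' : A.val = {y'} := hc'
      have : y = y' := Finset.singleton_injective (hA ▸ hA')
      rw [this]

lemma rel_of_subset_ne {i i' : AugIdx H} (hne : i ≠ i')
    (hsub : augSet H i ⊆ augSet H i') : augAnc H i' i ∨ augAnc H i i' := by
  cases i with
  | inl B =>
    cases i' with
    | inl A =>
      rcases eq_or_ne B.val A.val with he | hne'
      · exact absurd (congrArg Sum.inl (Subtype.ext he)) hne
      · exact Or.inl (show B.val ⊂ A.val from Finset.ssubset_iff_subset_ne.2 ⟨hsub, hne'⟩)
    | inr y =>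
      have hBy : B.val ⊆ {y} := hsub
      have : B.val = {y} := Finset.Subset.antisymm hBy (by
        obtain ⟨z, hz⟩ := H.nonempty_of_mem B.val B.property
        have : z = y := Finset.mem_singleton.1 (hBy hz)
        subst this
        exact Finset.singleton_subset_iff.2 hz)
      exact Or.inr (show y ∈ B.val from this ▸ Finset.mem_singleton_self y)
  | inr y =>
    cases i' with
    | inl A => exact Or.inl (show y ∈ A.val from Finset.singleton_subset_iff.1 hsub)
    | inr y' =>
      have : y = y' := Finset.singleton_injective (Finset.Subset.antisymm hsub
        (by
          have : y = y' := Finset.mem_singleton.1 (hsub (Finset.mem_singleton_self y))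
          rw [this]))
      exact absurd (by rw [this]) hne

/-- The zero set of the coarse-to-fine strategy on outcome `ω`. -/
def ctfZ (ω : AugIdx H → Bool) : Finset (AugIdx H) :=
  Finset.univ.filter (fun i => (∀ j, augAnc H j i → ω j = true) ∧ ω i = false)

lemma top_exists (ω : AugIdx H → Bool) {i : AugIdx H} (hωi : ω i = false) :
    ∃ t ∈ ctfZ H ω, t = i ∨ augAnc H t i := by
  classical
  set C := Finset.univ.filter (fun j => (j = i ∨ augAnc H j i) ∧ ω j = false) with hC
  have hiC : i ∈ C := Finset.mem_filter.2 ⟨Finset.mem_univ _, Or.inl rfl, hωi⟩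
  obtain ⟨t, htC, hmax⟩ := Finset.exists_max_image C (rnk H) ⟨i, hiC⟩
  obtain ⟨-, hrel, hωt⟩ := Finset.mem_filter.1 htC
  refine ⟨t, Finset.mem_filter.2 ⟨Finset.mem_univ _, ?_, hωt⟩, hrel⟩
  intro j hj
  by_contra hωj
  have hωj' : ω j = false := by
    cases h : ω j
    · rfl
    · exact absurd h hωj
  have hjC : j ∈ C := by
    refine Finset.mem_filter.2 ⟨Finset.mem_univ _, Or.inr ?_, hωj'⟩
    rcases hrel with rfl | h
    · exact hj
    · exact augAnc_trans H hj h
  exact absurd (hmax j hjC) (not_le.2 (rnk_lt_of_anc H hj))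


section Key
variable (β c : Finset Y → ℝ) (cstar : ℝ)
  (hr : ∀ i : AugIdx H, 0 < augCost H c cstar i / augPow H β i)
  (hratio : ∀ A : {A : Finset Y // A ∈ H.attrs},
      c A.val / β A.val ≤ ∑ j ∈ augChildren H A, augCost H c cstar j / augPow H β j)

include hr hratio in
lemma key_lemma : ∀ (n : ℕ) (t : AugIdx H) (D : Finset (AugIdx H)), rnk H t ≤ n →
    (∀ i ∈ D, t = i ∨ augAnc H t i) → augSet H t ⊆ D.sup (augSet H) →
    augCost H c cstar t / augPow H β t
      ≤ ∑ i ∈ D, augCost H c cstar i / augPow H β i := by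
  intro n
  induction n using Nat.strong_induction_on with
  | _ n IH =>
    intro t D hrank hdesc hcov
    by_cases htD : t ∈ D
    · exact Finset.single_le_sum (fun i _ => (hr i).le) htD
    cases t with
    | inr y =>
      exfalso
      have hD : D = ∅ := by
        rw [Finset.eq_empty_iff_forall_notMem]
        intro i hi
        rcases hdesc i hi with h | h
        · exact htD (h ▸ hi)
        · exact h
      rw [hD] at hcov
      simp only [Finset.sup_empty, Finset.bot_eq_empty] at hcov
      exact Finset.notMem_empty y (hcov (show y ∈ augSet H (Sum.inr y) from
        Finset.mem_singleton_self y))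
    | inl A =>
      set r : AugIdx H → ℝ := fun i => augCost H c cstar i / augPow H β i with hrdef
      set Dk : AugIdx H → Finset (AugIdx H) :=
        fun k => D.filter (fun i => k = i ∨ augAnc H k i) with hDk
      have hstep1 : ∀ k ∈ augChildren H A, r k ≤ ∑ i ∈ Dk k, r i := by
        intro k hk
        refine IH (rnk H k) ?_ k (Dk k) le_rfl (fun i hi => (Finset.mem_filter.1 hi).2) ?_
        · calc rnk H k < rnk H (Sum.inl A) := by
                rcases Finset.mem_filter.1 hk with ⟨-, hc'⟩
                cases k with
                | inl B =>
                  have := Finset.card_lt_card (hc'.1 : B.val ⊂ A.val)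
                  simp only [rnk, Sum.elim_inl]; omega
                | inr y' =>
                  have : 0 < A.val.card := Finset.card_pos.2 (H.nonempty_of_mem _ A.property)
                  simp only [rnk, Sum.elim_inl, Sum.elim_inr]; omega
            _ ≤ n := hrank
        · intro y' hy'
          have hy'A : y' ∈ A.val := augSet_child_subset H hk hy'
          have : y' ∈ D.sup (augSet H) := hcov (show y' ∈ augSet H (Sum.inl A) from hy'A)
          obtain ⟨i, hiD, hy'i⟩ := Finset.mem_sup.1 this
          have hanc : augAnc H (Sum.inl A) i := by
            rcases hdesc i hiD with h | h
            · exact absurd (h ▸ hiD) htD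
            · exact h
          obtain ⟨k', hk', hrel⟩ := exists_child_rel H A hanc
          have hy'k' : y' ∈ augSet H k' := augSet_subset_of_rel H hrel hy'i
          have : k = k' := children_disjoint H hk hk' hy' hy'k'
          subst this
          exact Finset.mem_sup.2 ⟨i, Finset.mem_filter.2 ⟨hiD, hrel⟩, hy'i⟩
      have hdisj : (↑(augChildren H A) : Set (AugIdx H)).PairwiseDisjoint Dk := by
        intro k hk k' hk' hne
        rw [Function.onFun, Finset.disjoint_left]
        intro i hik hik'
        obtain ⟨x, hx⟩ := augSet_nonempty H i
        have h1 : x ∈ augSet H k :=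
          augSet_subset_of_rel H (Finset.mem_filter.1 hik).2 hx
        have h2 : x ∈ augSet H k' :=
          augSet_subset_of_rel H (Finset.mem_filter.1 hik').2 hx
        exact hne (children_disjoint H (by exact_mod_cast hk) (by exact_mod_cast hk') h1 h2)
      calc r (Sum.inl A) = c A.val / β A.val := rfl
        _ ≤ ∑ k ∈ augChildren H A, r k := hratio A
        _ ≤ ∑ k ∈ augChildren H A, ∑ i ∈ Dk k, r i := Finset.sum_le_sum hstep1
        _ = ∑ i ∈ (augChildren H A).biUnion Dk, r i := (Finset.sum_biUnion hdisj).symm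
        _ ≤ ∑ i ∈ D, r i := Finset.sum_le_sum_of_subset_of_nonneg
              (Finset.biUnion_subset.2 fun k _ => Finset.filter_subset _ _)
              (fun i _ _ => (hr i).le)

include hr hratio in
lemma comp_lemma (ω : AugIdx H → Bool) (Z : Finset (AugIdx H))
    (hcov : IsCovering H Z) (hfalse : ∀ i ∈ Z, ω i = false) :
    ∑ t ∈ ctfZ H ω, augCost H c cstar t / augPow H β t
      ≤ ∑ i ∈ Z, augCost H c cstar i / augPow H β i := by
  classical
  set r : AugIdx H → ℝ := fun i => augCost H c cstar i / augPow H β i with hrdef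
  -- top existence
  have htop : ∀ i : AugIdx H, ω i = false → ∃ t ∈ ctfZ H ω, t = i ∨ augAnc H t i := by
    intro i hωi
    set C := Finset.univ.filter (fun j => (j = i ∨ augAnc H j i) ∧ ω j = false) with hC
    have hiC : i ∈ C := Finset.mem_filter.2 ⟨Finset.mem_univ _, Or.inl rfl, hωi⟩
    obtain ⟨t, htC, hmax⟩ := Finset.exists_max_image C (rnk H) ⟨i, hiC⟩
    obtain ⟨-, hrel, hωt⟩ := Finset.mem_filter.1 htC
    refine ⟨t, Finset.mem_filter.2 ⟨Finset.mem_univ _, ?_, hωt⟩, hrel⟩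
    intro j hj
    by_contra hωj
    have hωj' : ω j = false := by
      cases h : ω j
      · rfl
      · exact absurd h hωj
    have hjC : j ∈ C := by
      refine Finset.mem_filter.2 ⟨Finset.mem_univ _, Or.inr ?_, hωj'⟩
      rcases hrel with rfl | h
      · exact hj
      · exact augAnc_trans H hj h
    exact absurd (hmax j hjC) (not_le.2 (rnk_lt_of_anc H hj))
  -- ctfZ elements have pairwise disjoint sets
  have hpair : ∀ t ∈ ctfZ H ω, ∀ t' ∈ ctfZ H ω, ∀ x : Y,
      x ∈ augSet H t → x ∈ augSet H t' → t = t' := by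
    intro t ht t' ht' x hx hx'
    by_contra hne
    obtain ⟨hanc_t, hωt⟩ :
        (∀ j, augAnc H j t → ω j = true) ∧ ω t = false := by
      simpa [ctfZ, Finset.mem_filter] using ht
    obtain ⟨hanc_t', hωt'⟩ :
        (∀ j, augAnc H j t' → ω j = true) ∧ ω t' = false := by
      simpa [ctfZ, Finset.mem_filter] using ht'
    have hnest : augSet H t ⊆ augSet H t' ∨ augSet H t' ⊆ augSet H t := by
      cases t with
      | inl B =>
        cases t' with
        | inl B' =>
          rcases H.nested B.val B.property B'.val B'.property with hd | h | h
          · exact absurd (show x ∈ B.val ∩ B'.val from Finset.mem_inter.2 ⟨hx, hx'⟩)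
              (by rw [hd]; exact Finset.notMem_empty x)
          · exact Or.inl h
          · exact Or.inr h
        | inr y' =>
          have : x = y' := Finset.mem_singleton.1 hx'
          subst this
          exact Or.inr (Finset.singleton_subset_iff.2 hx)
      | inr y =>
        have : x = y := Finset.mem_singleton.1 hx
        subst this
        exact Or.inl (Finset.singleton_subset_iff.2 hx')
    rcases hnest with hsub | hsub
    · rcases rel_of_subset_ne H hne hsub with h | h
      · exact absurd (hanc_t t' h) (by rw [hωt']; exact Bool.false_ne_true)
      · exact absurd (hanc_t' t h) (by rw [hωt]; exact Bool.false_ne_true)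
    · rcases rel_of_subset_ne H (Ne.symm hne) hsub with h | h
      · exact absurd (hanc_t' t h) (by rw [hωt]; exact Bool.false_ne_true)
      · exact absurd (hanc_t t' h) (by rw [hωt']; exact Bool.false_ne_true)
  set Dt : AugIdx H → Finset (AugIdx H) :=
    fun t => Z.filter (fun i => t = i ∨ augAnc H t i) with hDt
  have hstep : ∀ t ∈ ctfZ H ω, r t ≤ ∑ i ∈ Dt t, r i := by
    intro t ht
    refine key_lemma H β c cstar hr hratio (rnk H t) t (Dt t) le_rfl
      (fun i hi => (Finset.mem_filter.1 hi).2) ?_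
    intro y' hy'
    have : y' ∈ Z.sup (augSet H) := by rw [hcov]; exact Finset.mem_univ y'
    obtain ⟨i, hiZ, hy'i⟩ := Finset.mem_sup.1 this
    obtain ⟨t', ht', hrel⟩ := htop i (hfalse i hiZ)
    have hy't' : y' ∈ augSet H t' := augSet_subset_of_rel H hrel hy'i
    have : t = t' := hpair t ht t' ht' y' hy' hy't'
    subst this
    exact Finset.mem_sup.2 ⟨i, Finset.mem_filter.2 ⟨hiZ, hrel⟩, hy'i⟩
  have hdisj : (↑(ctfZ H ω) : Set (AugIdx H)).PairwiseDisjoint Dt := by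
    intro t ht t' ht' hne
    rw [Function.onFun, Finset.disjoint_left]
    intro i hit hit'
    obtain ⟨x, hx⟩ := augSet_nonempty H i
    exact hne (hpair t (by exact_mod_cast ht) t' (by exact_mod_cast ht') x
      (augSet_subset_of_rel H (Finset.mem_filter.1 hit).2 hx)
      (augSet_subset_of_rel H (Finset.mem_filter.1 hit').2 hx))
  calc ∑ t ∈ ctfZ H ω, r t ≤ ∑ t ∈ ctfZ H ω, ∑ i ∈ Dt t, r i := Finset.sum_le_sum hstep
    _ = ∑ i ∈ (ctfZ H ω).biUnion Dt, r i := (Finset.sum_biUnion hdisj).symm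
    _ ≤ ∑ i ∈ Z, r i := Finset.sum_le_sum_of_subset_of_nonneg
          (Finset.biUnion_subset.2 fun t _ => Finset.filter_subset _ _)
          (fun i _ _ => (hr i).le)

end Key

/-- The coarse-to-fine strategy built from a (topologically sorted) list of tests,
given a set `Z` of tests already known to have returned `0`. -/
def ctfList : List (AugIdx H) → Finset (AugIdx H) → Strategy (AugIdx H)
  | [], _ => Strategy.leaf
  | i :: L, Z =>
      if ∃ j ∈ Z, augAnc H j i then ctfList L Z
      else Strategy.node i (ctfList L (insert i Z)) (ctfList L Z)

lemma ctf_perf (ω : AugIdx H → Bool) :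
    ∀ (L : List (AugIdx H)) (Z : Finset (AugIdx H)),
    List.Pairwise (fun a b => rnk H b ≤ rnk H a) L →
    (∀ j ∈ Z, ω j = false) →
    (∀ i ∈ L, (∃ j, augAnc H j i ∧ ω j = false ∧ j ∉ L) → ∃ j ∈ Z, augAnc H j i) →
    (ctfList H L Z).performed ω
      = L.toFinset.filter (fun i => ∀ j, augAnc H j i → ω j = true) := by
  intro L
  induction L with
  | nil => intro Z _ _ _; simp [ctfList, Strategy.performed]
  | cons i L ih =>
    intro Z hpw h1 h2
    have hpw1 : ∀ b ∈ L, rnk H b ≤ rnk H i := fun b hb => (List.pairwise_cons.1 hpw).1 b hb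
    have hpw2 : List.Pairwise (fun a b => rnk H b ≤ rnk H a) L := (List.pairwise_cons.1 hpw).2
    have hanc_not : ∀ j, augAnc H j i → j ∉ (i :: L) := by
      intro j hj hmem
      have hlt := rnk_lt_of_anc H hj
      rcases List.mem_cons.1 hmem with rfl | hjL
      · exact lt_irrefl _ hlt
      · exact absurd (hpw1 j hjL) (not_le.2 hlt)
    have hequiv : (∃ j ∈ Z, augAnc H j i) ↔ ∃ j, augAnc H j i ∧ ω j = false := by
      constructor
      · rintro ⟨j, hjZ, hj⟩; exact ⟨j, hj, h1 j hjZ⟩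
      · rintro ⟨j, hj, hωj⟩
        exact h2 i (List.mem_cons_self) ⟨j, hj, hωj, hanc_not j hj⟩
    by_cases hskip : ∃ j ∈ Z, augAnc H j i
    · rw [show ctfList H (i :: L) Z = ctfList H L Z from by rw [ctfList, if_pos hskip]]
      have hBad := hequiv.1 hskip
      have hres := ih Z hpw2 h1 ?h2'
      case h2' =>
        intro i' hi' ⟨j, hanc, hfalse, hjL⟩
        by_cases hji : j = i
        · subst hji
          obtain ⟨j0, hj0Z, hj0⟩ := hskip
          exact ⟨j0, hj0Z, augAnc_trans H hj0 hanc⟩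
        · exact h2 i' (List.mem_cons_of_mem i hi')
            ⟨j, hanc, hfalse, fun hmem => (List.mem_cons.1 hmem).elim hji hjL⟩
      rw [hres]
      have hPi : ¬ (∀ j, augAnc H j i → ω j = true) := by
        obtain ⟨j, hj, hωj⟩ := hBad
        intro hall
        rw [hall j hj] at hωj
        exact Bool.true_eq_false.mp hωj
      simp [List.toFinset_cons, Finset.filter_insert, hPi]
    · have hnBad : ∀ j, augAnc H j i → ω j = true := by
        intro j hj
        cases hωj : ω j
        · exact absurd (hequiv.2 ⟨j, hj, hωj⟩) hskip
        · rfl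
      rw [show ctfList H (i :: L) Z
          = Strategy.node i (ctfList H L (insert i Z)) (ctfList H L Z) from by
            rw [ctfList, if_neg hskip]]
      cases hωi : ω i
      · -- ω i = false : follow t0 with insert i Z
        have hres := ih (insert i Z) hpw2 ?c1 ?c2
        case c1 =>
          intro j hj
          rcases Finset.mem_insert.1 hj with rfl | hjZ
          · exact hωi
          · exact h1 j hjZ
        case c2 =>
          intro i' hi' ⟨j, hanc, hfalse, hjL⟩
          by_cases hji : j = i
          · subst hji; exact ⟨j, Finset.mem_insert_self _ _, hanc⟩
          · obtain ⟨j0, hj0Z, hj0⟩ := h2 i' (List.mem_cons_of_mem i hi')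
              ⟨j, hanc, hfalse, fun hmem => (List.mem_cons.1 hmem).elim hji hjL⟩
            exact ⟨j0, Finset.mem_insert_of_mem hj0Z, hj0⟩
        simp only [Strategy.performed, hωi, Bool.false_eq_true, if_false, hres]
        simp only [List.toFinset_cons, Finset.filter_insert]
        rw [if_pos hnBad]
      · -- ω i = true : follow t1 with Z
        have hres := ih Z hpw2 h1 ?c2
        case c2 =>
          intro i' hi' ⟨j, hanc, hfalse, hjL⟩
          have hji : j ≠ i := by
            rintro rfl; rw [hωi] at hfalse; exact Bool.true_eq_false.mp hfalse
          exact h2 i' (List.mem_cons_of_mem i hi')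
            ⟨j, hanc, hfalse, fun hmem => (List.mem_cons.1 hmem).elim hji hjL⟩
        simp only [Strategy.performed, hωi, if_true, hres]
        simp only [List.toFinset_cons, Finset.filter_insert]
        rw [if_pos hnBad]

lemma ctf_zero (ω : AugIdx H → Bool) :
    ∀ (L : List (AugIdx H)) (Z : Finset (AugIdx H)),
    List.Pairwise (fun a b => rnk H b ≤ rnk H a) L →
    (∀ j ∈ Z, ω j = false) →
    (∀ i ∈ L, (∃ j, augAnc H j i ∧ ω j = false ∧ j ∉ L) → ∃ j ∈ Z, augAnc H j i) →
    (ctfList H L Z).zeroSet ω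
      = L.toFinset.filter
          (fun i => (∀ j, augAnc H j i → ω j = true) ∧ ω i = false) := by
  intro L
  induction L with
  | nil => intro Z _ _ _; simp [ctfList, Strategy.zeroSet]
  | cons i L ih =>
    intro Z hpw h1 h2
    have hpw1 : ∀ b ∈ L, rnk H b ≤ rnk H i := fun b hb => (List.pairwise_cons.1 hpw).1 b hb
    have hpw2 : List.Pairwise (fun a b => rnk H b ≤ rnk H a) L := (List.pairwise_cons.1 hpw).2
    have hanc_not : ∀ j, augAnc H j i → j ∉ (i :: L) := by
      intro j hj hmem
      have hlt := rnk_lt_of_anc H hj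
      rcases List.mem_cons.1 hmem with rfl | hjL
      · exact lt_irrefl _ hlt
      · exact absurd (hpw1 j hjL) (not_le.2 hlt)
    have hequiv : (∃ j ∈ Z, augAnc H j i) ↔ ∃ j, augAnc H j i ∧ ω j = false := by
      constructor
      · rintro ⟨j, hjZ, hj⟩; exact ⟨j, hj, h1 j hjZ⟩
      · rintro ⟨j, hj, hωj⟩
        exact h2 i (List.mem_cons_self) ⟨j, hj, hωj, hanc_not j hj⟩
    by_cases hskip : ∃ j ∈ Z, augAnc H j i
    · rw [show ctfList H (i :: L) Z = ctfList H L Z from by rw [ctfList, if_pos hskip]]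
      have hBad := hequiv.1 hskip
      have hres := ih Z hpw2 h1 ?h2'
      case h2' =>
        intro i' hi' ⟨j, hanc, hfalse, hjL⟩
        by_cases hji : j = i
        · subst hji
          obtain ⟨j0, hj0Z, hj0⟩ := hskip
          exact ⟨j0, hj0Z, augAnc_trans H hj0 hanc⟩
        · exact h2 i' (List.mem_cons_of_mem i hi')
            ⟨j, hanc, hfalse, fun hmem => (List.mem_cons.1 hmem).elim hji hjL⟩
      rw [hres]
      have hPi : ¬ ((∀ j, augAnc H j i → ω j = true) ∧ ω i = false) := by
        obtain ⟨j, hj, hωj⟩ := hBad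
        rintro ⟨hall, -⟩
        rw [hall j hj] at hωj
        exact Bool.true_eq_false.mp hωj
      simp [List.toFinset_cons, Finset.filter_insert, hPi]
    · have hnBad : ∀ j, augAnc H j i → ω j = true := by
        intro j hj
        cases hωj : ω j
        · exact absurd (hequiv.2 ⟨j, hj, hωj⟩) hskip
        · rfl
      rw [show ctfList H (i :: L) Z
          = Strategy.node i (ctfList H L (insert i Z)) (ctfList H L Z) from by
            rw [ctfList, if_neg hskip]]
      cases hωi : ω i
      · have hres := ih (insert i Z) hpw2 ?c1 ?c2
        case c1 =>
          intro j hj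
          rcases Finset.mem_insert.1 hj with rfl | hjZ
          · exact hωi
          · exact h1 j hjZ
        case c2 =>
          intro i' hi' ⟨j, hanc, hfalse, hjL⟩
          by_cases hji : j = i
          · subst hji; exact ⟨j, Finset.mem_insert_self _ _, hanc⟩
          · obtain ⟨j0, hj0Z, hj0⟩ := h2 i' (List.mem_cons_of_mem i hi')
              ⟨j, hanc, hfalse, fun hmem => (List.mem_cons.1 hmem).elim hji hjL⟩
            exact ⟨j0, Finset.mem_insert_of_mem hj0Z, hj0⟩
        simp only [Strategy.zeroSet, hωi, Bool.false_eq_true, if_false, hres]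
        have hPi : (∀ j, augAnc H j i → ω j = true) ∧ ω i = false := ⟨hnBad, hωi⟩
        rw [List.toFinset_cons, Finset.filter_insert, if_pos hPi]
      · have hres := ih Z hpw2 h1 ?c2
        case c2 =>
          intro i' hi' ⟨j, hanc, hfalse, hjL⟩
          have hji : j ≠ i := by
            rintro rfl; rw [hωi] at hfalse; exact Bool.true_eq_false.mp hfalse
          exact h2 i' (List.mem_cons_of_mem i hi')
            ⟨j, hanc, hfalse, fun hmem => (List.mem_cons.1 hmem).elim hji hjL⟩
        simp only [Strategy.zeroSet, hωi, if_true, hres]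
        have hPi : ¬ ((∀ j, augAnc H j i → ω j = true) ∧ ω i = false) := by
          rintro ⟨-, hf⟩; rw [hωi] at hf; exact Bool.true_eq_false.mp hf
        simp [List.toFinset_cons, Finset.filter_insert, hPi]

lemma ctf_noRepeatFrom :
    ∀ (L : List (AugIdx H)) (Z used : Finset (AugIdx H)), L.Nodup →
      (∀ i ∈ L, i ∉ used) → (ctfList H L Z).noRepeatFrom used := by
  intro L
  induction L with
  | nil => intro Z used _ _; trivial
  | cons i L ih =>
    intro Z used hnd hdisj
    have hnd1 : i ∉ L := (List.nodup_cons.1 hnd).1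
    have hnd2 : L.Nodup := (List.nodup_cons.1 hnd).2
    by_cases hskip : ∃ j ∈ Z, augAnc H j i
    · rw [show ctfList H (i :: L) Z = ctfList H L Z from by rw [ctfList, if_pos hskip]]
      exact ih Z used hnd2 (fun i' hi' => hdisj i' (List.mem_cons_of_mem i hi'))
    · rw [show ctfList H (i :: L) Z
          = Strategy.node i (ctfList H L (insert i Z)) (ctfList H L Z) from by
            rw [ctfList, if_neg hskip]]
      refine ⟨hdisj i (List.mem_cons_self), ?_, ?_⟩
      · refine ih (insert i Z) (insert i used) hnd2 ?_
        intro i' hi' hmem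
        rcases Finset.mem_insert.1 hmem with rfl | h
        · exact hnd1 hi'
        · exact hdisj i' (List.mem_cons_of_mem i hi') h
      · refine ih Z (insert i used) hnd2 ?_
        intro i' hi' hmem
        rcases Finset.mem_insert.1 hmem with rfl | h
        · exact hnd1 hi'
        · exact hdisj i' (List.mem_cons_of_mem i hi') h

end CTFProofAux

/-- **Optimality of coarse-to-fine search under the child-ratio condition (Corollary 1).**
In the augmented hierarchy (original tests of cost `c A > 0` and power `β A ∈ (0,1]`, plus
perfect singleton tests of cost `c* > 0` and power `1`, all mutually independent under the
background measure), if for every attribute `A ∈ 𝒜` the cost-to-power ratio of `A` is at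
most the sum of the cost-to-power ratios of its direct children in the augmented
hierarchy, then the coarse-to-fine strategy minimizes the expected cost over all
no-error strategies. -/

theorem ctf_optimal_of_child_ratio (H : Hierarchy Y) (β c : Finset Y → ℝ)
    (hβ : ∀ A ∈ H.attrs, 0 < β A ∧ β A ≤ 1) (hc : ∀ A ∈ H.attrs, 0 < c A)
    (cstar : ℝ) (hcstar : 0 < cstar)
    (hratio : ∀ A : {A : Finset Y // A ∈ H.attrs},
        c A.val / β A.val
          ≤ ∑ j ∈ augChildren H A, augCost H c cstar j / augPow H β j) :
    ∃ T : Strategy (AugIdx H), IsCTFAug H T ∧ T.noRepeat ∧ NoError H β T ∧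
      ∀ T' : Strategy (AugIdx H), T'.noRepeat → NoError H β T' →
        testCost (augPow H β) (augCost H c cstar) T
          ≤ testCost (augPow H β) (augCost H c cstar) T' := by
    classical
  set pw := augPow H β with hpwdef
  set cst := augCost H c cstar with hcstdef
  have hpw_pos : ∀ i : AugIdx H, 0 < pw i := by
    intro i
    cases i with
    | inl A => exact (hβ A.val A.property).1
    | inr y => exact one_pos
  have hpw_le : ∀ i : AugIdx H, pw i ≤ 1 := by
    intro i
    cases i with
    | inl A => exact (hβ A.val A.property).2
    | inr y => exact le_refl 1
  have hr : ∀ i : AugIdx H, 0 < cst i / pw i := by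
    intro i
    refine div_pos ?_ (hpw_pos i)
    cases i with
    | inl A => exact hc A.val A.property
    | inr y => exact hcstar
  -- a topologically sorted list of all tests
  set tle : AugIdx H → AugIdx H → Bool := fun a b => decide (rnk H b ≤ rnk H a) with htle
  set L : List (AugIdx H) := (Finset.univ.toList).mergeSort tle with hLdef
  have hperm := List.mergeSort_perm (Finset.univ.toList (α := AugIdx H)) tle
  have hnd : L.Nodup := hperm.nodup_iff.2 (Finset.nodup_toList _)
  have hmem : ∀ i : AugIdx H, i ∈ L :=
    fun i => hperm.mem_iff.2 (Finset.mem_toList.2 (Finset.mem_univ i))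
  have hsorted : List.Pairwise (fun a b => rnk H b ≤ rnk H a) L := by
    have hs := List.pairwise_mergeSort (le := tle)
      (fun a b c hab hbc => by
        simp only [htle, decide_eq_true_eq] at hab hbc ⊢
        exact hbc.trans hab)
      (fun a b => by
        simp only [htle, Bool.or_eq_true, decide_eq_true_eq]
        exact (le_total (rnk H b) (rnk H a)))
      (Finset.univ.toList (α := AugIdx H))
    exact hs.imp (fun h => by simpa [htle, decide_eq_true_eq] using h)
  have hLto : L.toFinset = Finset.univ :=
    Finset.eq_univ_iff_forall.2 fun i => List.mem_toFinset.2 (hmem i)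
  have hcond2 : ∀ ω : AugIdx H → Bool, ∀ i ∈ L,
      (∃ j, augAnc H j i ∧ ω j = false ∧ j ∉ L) →
      ∃ j ∈ (∅ : Finset (AugIdx H)), augAnc H j i := by
    rintro ω i - ⟨j, -, -, hj⟩
    exact absurd (hmem j) hj
  have hcond1 : ∀ ω : AugIdx H → Bool, ∀ j ∈ (∅ : Finset (AugIdx H)), ω j = false :=
    fun ω j hj => absurd hj (Finset.notMem_empty j)
  refine ⟨ctfList H L ∅, ?_, ?_, ?_, ?_⟩
  · -- IsCTFAug
    intro ω
    rw [ctf_perf H ω L ∅ hsorted (hcond1 ω) (hcond2 ω), hLto]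
  · -- noRepeat
    exact ctf_noRepeatFrom H L ∅ ∅ hnd (fun i _ => Finset.notMem_empty i)
  · -- NoError
    have hzero : ∀ ω, (ctfList H L ∅).zeroSet ω = ctfZ H ω := by
      intro ω
      rw [ctf_zero H ω L ∅ hsorted (hcond1 ω) (hcond2 ω), hLto]
      rfl
    show probOf pw _ = 0
    refine Finset.sum_eq_zero ?_
    intro ω hω
    have hnc : ¬ IsCovering H ((ctfList H L ∅).zeroSet ω) := (Finset.mem_filter.1 hω).2
    by_contra h0
    apply hnc
    rw [hzero ω]
    have hfalse : ∀ y : Y, ω (Sum.inr y) = false := by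
      intro y
      cases hωy : ω (Sum.inr y)
      · rfl
      · exfalso
        apply h0
        refine Finset.prod_eq_zero (Finset.mem_univ (Sum.inr y)) ?_
        rw [hωy, if_pos rfl]
        show 1 - pw (Sum.inr y) = 0
        show 1 - (1 : ℝ) = 0
        ring
    -- ctfZ covers
    refine Finset.eq_univ_iff_forall.2 fun y => ?_
    obtain ⟨t, ht, hrel⟩ := top_exists H ω (hfalse y)
    exact Finset.mem_sup.2 ⟨t, ht,
      augSet_subset_of_rel H hrel (Finset.mem_singleton_self y)⟩
  · -- optimality
    intro T' hnr' hne'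
    have hzero : ∀ ω, (ctfList H L ∅).zeroSet ω = ctfZ H ω := by
      intro ω
      rw [ctf_zero H ω L ∅ hsorted (hcond1 ω) (hcond2 ω), hLto]
      rfl
    have hpwne : ∀ i : AugIdx H, pw i ≠ 0 := fun i => (hpw_pos i).ne'
    rw [testCost_eq pw cst hpwne (ctfList H L ∅), testCost_eq pw cst hpwne T']
    refine Finset.sum_le_sum fun ω _ => ?_
    rcases eq_or_ne (pOmega pw ω) 0 with h0 | h0
    · rw [h0, zero_mul, zero_mul]
    · have hnonneg : 0 ≤ pOmega pw ω :=
        pOmega_nonneg pw (fun i => ⟨(hpw_pos i).le, hpw_le i⟩) ω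
      refine mul_le_mul_of_nonneg_left ?_ hnonneg
      have hcov' : IsCovering H (T'.zeroSet ω) := by
        by_contra hnc
        have hall := (Finset.sum_eq_zero_iff_of_nonneg
          (fun ω' _ => pOmega_nonneg pw (fun i => ⟨(hpw_pos i).le, hpw_le i⟩) ω')).1 hne'
        exact h0 (hall ω (Finset.mem_filter.2 ⟨Finset.mem_univ ω, hnc⟩))
      have hfalse' : ∀ i ∈ T'.zeroSet ω, ω i = false := by
        intro i hi
        rw [zeroSet_eq_filter] at hi
        exact (Finset.mem_filter.1 hi).2
      rw [hzero ω]
      exact comp_lemma H β c cstar hr hratio ω (T'.zeroSet ω) hcov' hfalse'
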